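/- arXiv:1512.04998 — 3 statements merged into one kernel-verified Lean document; each statement's English description precedes it below -/
import Mathlib

section
/- Let G ⊆ S×T be a finite bipartite graph such that any two distinct vertices of T have at most b common neighbors in S, and any two distinct vertices of S have at most b common neighbors in T. Then |G| ≤ |S| + (b·|S|)^{1/2}·|T|. -/
/-- Kővári–Sós–Turán type bound: if any two distinct vertices of `T` have at most
`b` common neighbors in `S` and any two distinct vertices of `S` have at most `b`
common neighbors in `T`, then `|G| ≤ |S| + (b·|S|)^{1/2}·|T|`. -/
theorem kst_edge_bound {α β : Type*} [DecidableEq α] [DecidableEq β]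
    (S : Finset α) (T : Finset β) (G : Finset (α × β)) (hG : G ⊆ S ×ˢ T) (b : ℕ)
    (hT : ∀ t ∈ T, ∀ t' ∈ T, t ≠ t' →
      (S.filter (fun s => (s, t) ∈ G ∧ (s, t') ∈ G)).card ≤ b)
    (hS : ∀ s ∈ S, ∀ s' ∈ S, s ≠ s' →
      (T.filter (fun t => (s, t) ∈ G ∧ (s', t) ∈ G)).card ≤ b) :
    (G.card : ℝ) ≤ S.card + Real.sqrt (b * S.card) * T.card := by
  classical
  have hGeq : G = (S ×ˢ T).filter (· ∈ G) := by
    ext p; simp only [Finset.mem_filter]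
    exact ⟨fun h => ⟨hG h, h⟩, fun h => h.2⟩
  have hE : G.card = ∑ s ∈ S, (T.filter fun t => (s, t) ∈ G).card := by
    conv_lhs => rw [hGeq]
    rw [Finset.card_filter, Finset.sum_product]
    exact Finset.sum_congr rfl fun s _ => (Finset.card_filter _ _).symm
  -- sum of squares double count
  have hsq : ∑ s ∈ S, (T.filter fun t => (s, t) ∈ G).card ^ 2 =
      ∑ p ∈ T ×ˢ T, (S.filter fun s => (s, p.1) ∈ G ∧ (s, p.2) ∈ G).card := by
    have key : ∀ s, (T.filter fun t => (s, t) ∈ G).card ^ 2 = ∑ p ∈ T ×ˢ T,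
        ((if (s, p.1) ∈ G then 1 else 0) * (if (s, p.2) ∈ G then 1 else 0) : ℕ) := by
      intro s
      rw [Finset.card_filter, sq, Finset.sum_mul_sum, Finset.sum_product]
    rw [Finset.sum_congr rfl fun s _ => key s, Finset.sum_comm]
    refine Finset.sum_congr rfl fun p _ => ?_
    rw [Finset.card_filter]
    refine Finset.sum_congr rfl fun s _ => ?_
    by_cases h1 : (s, p.1) ∈ G <;> by_cases h2 : (s, p.2) ∈ G <;> simp [h1, h2]
  have hdiag : ∑ p ∈ T.diag, (S.filter fun s => (s, p.1) ∈ G ∧ (s, p.2) ∈ G).card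
      = G.card := by
    rw [Finset.sum_diag]
    conv_rhs => rw [hGeq]
    rw [Finset.card_filter, Finset.sum_product, Finset.sum_comm]
    refine Finset.sum_congr rfl fun t _ => ?_
    rw [Finset.card_filter]
    refine Finset.sum_congr rfl fun s _ => ?_
    by_cases h : (s, t) ∈ G <;> simp [h]
  have hoff : ∑ p ∈ T.offDiag, (S.filter fun s => (s, p.1) ∈ G ∧ (s, p.2) ∈ G).card
      ≤ b * (T.card * T.card) := by
    calc ∑ p ∈ T.offDiag, (S.filter fun s => (s, p.1) ∈ G ∧ (s, p.2) ∈ G).card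
        ≤ ∑ _p ∈ T.offDiag, b := by
          refine Finset.sum_le_sum fun p hp => ?_
          rw [Finset.mem_offDiag] at hp
          exact hT p.1 hp.1 p.2 hp.2.1 hp.2.2
      _ = T.offDiag.card * b := by rw [Finset.sum_const, smul_eq_mul]
      _ ≤ T.card * T.card * b := by
          refine Nat.mul_le_mul_right _ ?_
          have := Finset.offDiag_card T
          omega
      _ = b * (T.card * T.card) := by ring
  have hsplit : ∑ s ∈ S, (T.filter fun t => (s, t) ∈ G).card ^ 2
      ≤ G.card + b * (T.card * T.card) := by
    rw [hsq, ← Finset.diag_union_offDiag T,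
      Finset.sum_union (Finset.disjoint_diag_offDiag T), hdiag]
    exact Nat.add_le_add_left hoff _
  -- Cauchy–Schwarz in ℝ
  have hCS : (G.card : ℝ) ^ 2 ≤
      (S.card : ℝ) * ∑ s ∈ S, ((T.filter fun t => (s, t) ∈ G).card : ℝ) ^ 2 := by
    have h := Finset.sum_mul_sq_le_sq_mul_sq S (fun _ => (1 : ℝ))
      (fun s => ((T.filter fun t => (s, t) ∈ G).card : ℝ))
    simp only [one_mul, one_pow, Finset.sum_const, nsmul_eq_mul, mul_one] at h
    calc (G.card : ℝ) ^ 2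
        = (∑ s ∈ S, ((T.filter fun t => (s, t) ∈ G).card : ℝ)) ^ 2 := by
          rw [hE]; push_cast; ring
      _ ≤ _ := h
  have h1 : ∑ s ∈ S, ((T.filter fun t => (s, t) ∈ G).card : ℝ) ^ 2
      ≤ (G.card : ℝ) + (b : ℝ) * ((T.card : ℝ) * (T.card : ℝ)) := by
    have h2 : ((∑ s ∈ S, (T.filter fun t => (s, t) ∈ G).card ^ 2 : ℕ) : ℝ)
        ≤ ((G.card + b * (T.card * T.card) : ℕ) : ℝ) := by exact_mod_cast hsplit
    push_cast at h2
    exact h2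
  have hkey : (G.card : ℝ) ^ 2 ≤ (S.card : ℝ) * ((G.card : ℝ)
      + (b : ℝ) * ((T.card : ℝ) * (T.card : ℝ))) :=
    hCS.trans (mul_le_mul_of_nonneg_left h1 (Nat.cast_nonneg _))
  have hb0 : (0:ℝ) ≤ (b : ℝ) * (S.card : ℝ) :=
    mul_nonneg (Nat.cast_nonneg _) (Nat.cast_nonneg _)
  have hc2 : Real.sqrt ((b : ℝ) * (S.card : ℝ)) ^ 2 = (b : ℝ) * (S.card : ℝ) :=
    Real.sq_sqrt hb0
  have hc0 : 0 ≤ Real.sqrt ((b : ℝ) * (S.card : ℝ)) := Real.sqrt_nonneg _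
  have hE0 : (0:ℝ) ≤ (G.card : ℝ) := Nat.cast_nonneg _
  have hn0 : (0:ℝ) ≤ (S.card : ℝ) := Nat.cast_nonneg _
  have hm0 : (0:ℝ) ≤ (T.card : ℝ) := Nat.cast_nonneg _
  nlinarith [mul_nonneg (mul_nonneg hc0 hm0) hn0, mul_nonneg hc0 hm0,
    sq_nonneg ((G.card : ℝ) - Real.sqrt ((b : ℝ) * (S.card : ℝ)) * (T.card : ℝ)),
    sq_nonneg ((G.card : ℝ) - (S.card : ℝ))]
end

section
/- Let G ⊆ S×T be a finite bipartite graph in which S has combinatorial dimension at most k (with constant b), where combinatorial dimension is defined recursively: S has dimension 0 in G if |S| ≤ b; S has dimension at most k ≥ 1 if there is T' ⊆ T with |T∖T'| ≤ b such that for all t ∈ T', the neighborhood S_t has combinatorial dimension at most k−1 in the induced subgraph on S_t × (T'∖{t}). Then there is a constant C(k,b) such that for any complete bipartite subgraph S₀×T₀ ⊆ G, either min(|S₀|,|T₀|) ≤ C(k,b) or |S₀|·|T₀| ≤ C(k,b)(|S|+|T|). -/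
/-- `S` has combinatorial dimension at most `k` (with constant `b`) in the
bipartite graph `G ⊆ S × T`: dimension `0` means `|S| ≤ b`; dimension at most
`k+1` means there is `T' ⊆ T` with `|T \ T'| ≤ b` such that for all `t ∈ T'`,
the neighborhood `S_t` has dimension at most `k` in the induced subgraph on
`S_t × (T' \ {t})`. -/
def HasCombDim {α β : Type} [DecidableEq α] [DecidableEq β] (b : ℕ) :
    ℕ → Finset α → Finset β → Finset (α × β) → Prop
  | 0, S, _, _ => S.card ≤ b
  | k + 1, S, T, G => ∃ T' ⊆ T, (T \ T').card ≤ b ∧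
      ∀ t ∈ T', HasCombDim b k (S.filter (fun s => (s, t) ∈ G)) (T'.erase t)
        (G.filter (fun p => p.1 ∈ S ∧ (p.1, t) ∈ G ∧ p.2 ∈ T'.erase t))

/-- If `S` has combinatorial dimension at most `k` in `G`, then every complete
bipartite subgraph `S₀ × T₀ ⊆ G` has at most `C(k,b)·(|S|+|T|)` edges. -/
theorem complete_bipartite_le_of_combDim (k b : ℕ) :
    ∃ C : ℕ, ∀ (α β : Type) [DecidableEq α] [DecidableEq β]
      (S : Finset α) (T : Finset β) (G : Finset (α × β)),
      G ⊆ S ×ˢ T → HasCombDim b k S T G →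
      ∀ (S₀ : Finset α) (T₀ : Finset β), S₀ ⊆ S → T₀ ⊆ T → S₀ ×ˢ T₀ ⊆ G →
        S₀.card * T₀.card ≤ C * (S.card + T.card) := by
  induction k with
  | zero =>
    refine ⟨b, ?_⟩
    intro α β _ _ S T G hG hdim S₀ T₀ hS₀ hT₀ hsub
    have h1 : S₀.card ≤ b := le_trans (Finset.card_le_card hS₀) hdim
    have h2 : T₀.card ≤ T.card := Finset.card_le_card hT₀
    calc S₀.card * T₀.card ≤ b * T.card := Nat.mul_le_mul h1 h2
      _ ≤ b * (S.card + T.card) := Nat.mul_le_mul_left _ (Nat.le_add_left _ _)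
  | succ k ih =>
    obtain ⟨C, hC⟩ := ih
    refine ⟨C + b + 1, ?_⟩
    intro α β _ _ S T G hG hdim S₀ T₀ hS₀ hT₀ hsub
    obtain ⟨T', hT'sub, hTb, hrec⟩ := hdim
    by_cases h : ∃ t ∈ T₀, t ∈ T'
    · obtain ⟨t, htT₀, htT'⟩ := h
      set St := S.filter (fun s => (s, t) ∈ G) with hSt
      set G' := G.filter (fun p => p.1 ∈ S ∧ (p.1, t) ∈ G ∧ p.2 ∈ T'.erase t) with hG'
      have hS₀St : S₀ ⊆ St := by
        intro s hs
        simp only [hSt, Finset.mem_filter]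
        exact ⟨hS₀ hs, hsub (Finset.mem_product.mpr ⟨hs, htT₀⟩)⟩
      have hG'sub : G' ⊆ St ×ˢ T'.erase t := by
        intro p hp
        simp only [hG', Finset.mem_filter] at hp
        exact Finset.mem_product.mpr ⟨Finset.mem_filter.mpr ⟨hp.2.1, hp.2.2.1⟩, hp.2.2.2⟩
      set T₀' := T₀ ∩ T'.erase t with hT₀'
      have hsub' : S₀ ×ˢ T₀' ⊆ G' := by
        intro p hp
        obtain ⟨hp1, hp2⟩ := Finset.mem_product.mp hp
        have hp2' := Finset.mem_inter.mp hp2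
        refine Finset.mem_filter.mpr ⟨hsub (Finset.mem_product.mpr ⟨hp1, hp2'.1⟩),
          hS₀ hp1, hsub (Finset.mem_product.mpr ⟨hp1, htT₀⟩), hp2'.2⟩
      have key := hC α β St (T'.erase t) G' hG'sub (hrec t htT')
        S₀ T₀' hS₀St (Finset.inter_subset_right) hsub'
      have hcard : T₀.card ≤ T₀'.card + (b + 1) := by
        have hsd : T₀ \ T'.erase t ⊆ insert t (T \ T') := by
          intro x hx
          obtain ⟨hx1, hx2⟩ := Finset.mem_sdiff.mp hx
          simp only [Finset.mem_erase, not_and] at hx2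
          by_cases hxt : x = t
          · exact Finset.mem_insert.mpr (Or.inl hxt)
          · exact Finset.mem_insert.mpr (Or.inr (Finset.mem_sdiff.mpr ⟨hT₀ hx1, hx2 hxt⟩))
        have h3 : (T₀ \ T'.erase t).card ≤ b + 1 := by
          calc (T₀ \ T'.erase t).card ≤ (insert t (T \ T')).card := Finset.card_le_card hsd
            _ ≤ (T \ T').card + 1 := Finset.card_insert_le _ _
            _ ≤ b + 1 := by omega
        have h4 := Finset.card_inter_add_card_sdiff T₀ (T'.erase t)
        have heq : T₀'.card = (T₀ ∩ T'.erase t).card := by rw [hT₀']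
        omega
      have hStS : St.card ≤ S.card := Finset.card_le_card (Finset.filter_subset _ _)
      have hTe : (T'.erase t).card ≤ T.card :=
        Finset.card_le_card (le_trans (Finset.erase_subset _ _) hT'sub)
      have hS₀S : S₀.card ≤ S.card := Finset.card_le_card hS₀
      calc S₀.card * T₀.card ≤ S₀.card * (T₀'.card + (b + 1)) := Nat.mul_le_mul_left _ hcard
        _ = S₀.card * T₀'.card + S₀.card * (b + 1) := by ring
        _ ≤ C * (St.card + (T'.erase t).card) + S.card * (b + 1) := by
            exact Nat.add_le_add key (Nat.mul_le_mul_right _ hS₀S)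
        _ ≤ (C + b + 1) * (S.card + T.card) := by nlinarith
    · push_neg at h
      have hT₀b : T₀.card ≤ b := by
        have : T₀ ⊆ T \ T' := fun x hx => Finset.mem_sdiff.mpr ⟨hT₀ hx, h x hx⟩
        exact le_trans (Finset.card_le_card this) hTb
      calc S₀.card * T₀.card ≤ S.card * b :=
          Nat.mul_le_mul (Finset.card_le_card hS₀) hT₀b
        _ ≤ (C + b + 1) * (S.card + T.card) := by nlinarith
end

section
/- Let G ⊆ S×T be a finite bipartite graph in which S has combinatorial dimension at most k ≥ 1 with constant b. Then G has at most C(k,b)·(|S| + |S|^{1−1/k}·|T|) edges. -/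
open Finset

theorem sum_rpow_le_card_rpow_mul_rpow_sum {ι : Type*} (s : Finset ι) {x : ι → ℝ}
    (hx : ∀ i, 0 ≤ x i) {θ : ℝ} (h0 : 0 ≤ θ) (h1 : θ ≤ 1) :
    ∑ i ∈ s, x i ^ θ ≤ (#s : ℝ) ^ (1 - θ) * (∑ i ∈ s, x i) ^ θ := by
  rcases h0.eq_or_lt with rfl | hθ
  · simp
  · have := Real.inner_le_weight_mul_Lp_of_nonneg s (p := θ⁻¹) ((one_le_inv₀ hθ).mpr h1)
      (fun _ => 1) (fun i => x i ^ θ) (fun _ => zero_le_one) (fun i => Real.rpow_nonneg (hx i) θ)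
    simpa [← Real.rpow_mul (hx _), hθ.ne'] using this

theorem le_two_mul_or_rpow_sub_le_of_sq_le {x a c θ : ℝ} (hx : 0 ≤ x) (ha : 0 ≤ a)
    (h : x ^ 2 ≤ a * x + c * x ^ θ) : x ≤ 2 * a ∨ x ^ (2 - θ) ≤ 2 * c := by
  refine (le_or_gt x (2 * a)).imp_right fun hxa => ?_
  have hx0 : 0 < x := by linarith
  rw [Real.rpow_sub hx0, Real.rpow_two, div_le_iff₀ (by positivity)]
  nlinarith

theorem le_mul_rpow_inv_mul_of_rpow_le {x s t D p : ℝ} (hx : 0 ≤ x) (hs : 0 ≤ s) (ht : 0 ≤ t)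
    (hD : 1 ≤ D) (hp : 1 ≤ p) (h : x ^ p ≤ D * s * t ^ p) : x ≤ D * s ^ p⁻¹ * t := by
  have hp0 : p ≠ 0 := by positivity
  calc x = (x ^ p) ^ p⁻¹ := (Real.rpow_rpow_inv hx hp0).symm
    _ ≤ (D * s * t ^ p) ^ p⁻¹ := by gcongr
    _ = D ^ p⁻¹ * s ^ p⁻¹ * t := by
      rw [Real.mul_rpow (by positivity) (by positivity), Real.mul_rpow (by positivity) hs,
        Real.rpow_rpow_inv ht hp0]
    _ ≤ D * s ^ p⁻¹ * t := by
      gcongr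
      exact Real.rpow_le_self_of_one_le hD (inv_le_one_of_one_le₀ hp)

theorem sum_le_of_sq_sum_le {ι : Type*} (s : Finset ι) {d e : ι → ℝ} {σ τ C θ : ℝ}
    (hd : ∀ i, 0 ≤ d i) (hσ : 0 ≤ σ) (hτ : #s ≤ τ) (hC : 1 ≤ C) (hθ0 : 0 ≤ θ) (hθ1 : θ ≤ 1)
    (hsq : (∑ i ∈ s, d i) ^ 2 ≤ σ * ∑ i ∈ s, (e i + d i))
    (he : ∀ i ∈ s, e i ≤ C * (d i + d i ^ θ * τ)) :
    ∑ i ∈ s, d i ≤ 2 * (C + 1) * σ + 2 * C * σ ^ (2 - θ)⁻¹ * τ := by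
  set E := ∑ i ∈ s, d i
  have hE : 0 ≤ E := sum_nonneg fun i _ => hd i
  have hτ0 : 0 ≤ τ := (Nat.cast_nonneg _).trans hτ
  have hpower : ∑ i ∈ s, d i ^ θ ≤ τ ^ (1 - θ) * E ^ θ :=
    (sum_rpow_le_card_rpow_mul_rpow_sum s hd hθ0 hθ1).trans (by gcongr)
  have hE2 : E ^ 2 ≤ ((C + 1) * σ) * E + (C * σ * τ ^ (2 - θ)) * E ^ θ :=
    calc E ^ 2 ≤ σ * ∑ i ∈ s, ((C + 1) * d i + C * τ * d i ^ θ) := by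
          refine hsq.trans (mul_le_mul_of_nonneg_left (sum_le_sum fun i hi => ?_) hσ)
          nlinarith [he i hi]
      _ = σ * ((C + 1) * E + C * τ * ∑ i ∈ s, d i ^ θ) := by
          rw [sum_add_distrib, ← mul_sum, ← mul_sum]
      _ ≤ σ * ((C + 1) * E + C * τ * (τ ^ (1 - θ) * E ^ θ)) := by gcongr
      _ = ((C + 1) * σ) * E + (C * σ * τ ^ (2 - θ)) * E ^ θ := by
          rw [show 2 - θ = 1 + (1 - θ) by ring, Real.rpow_one_add' hτ0 (by linarith)]
          ring
  have hrest : 0 ≤ 2 * C * σ ^ (2 - θ)⁻¹ * τ := by positivity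
  rcases le_two_mul_or_rpow_sub_le_of_sq_le hE (by positivity) hE2 with h | h
  · linarith
  · have := le_mul_rpow_inv_mul_of_rpow_le (D := 2 * C) hE hσ hτ0 (by linarith) (by linarith)
      (h.trans_eq (by ring))
    linarith [mul_nonneg (by linarith : (0 : ℝ) ≤ 2 * (C + 1)) hσ]

section Graph

variable {α β : Type} [DecidableEq α] [DecidableEq β]

theorem card_eq_sum_card_filter_mem (S : Finset α) {T : Finset β} {G : Finset (α × β)}
    (hG : G ⊆ S ×ˢ T) : #G = ∑ t ∈ T, #(S.filter fun s => (s, t) ∈ G) := by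
  conv_lhs => rw [← inter_eq_right.mpr hG, ← filter_mem_eq_inter]
  rw [card_filter, sum_product_right]
  simp only [card_filter]

theorem card_le_mul_add_sum_card_filter_mem {b : ℕ} {S : Finset α} {T T' : Finset β}
    {G : Finset (α × β)} (hG : G ⊆ S ×ˢ T) (hT' : T' ⊆ T) (hb : #(T \ T') ≤ b) :
    #G ≤ b * #S + ∑ t ∈ T', #(S.filter fun s => (s, t) ∈ G) := by
  rw [card_eq_sum_card_filter_mem S hG, ← sum_sdiff hT']
  gcongr
  calc ∑ t ∈ T \ T', #(S.filter fun s => (s, t) ∈ G)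
      ≤ ∑ _t ∈ T \ T', #S := sum_le_sum fun t _ => card_filter_le _ _
    _ ≤ b * #S := by rw [sum_const, smul_eq_mul]; gcongr

theorem card_filter_link_add_card_filter_mem (S : Finset α) {T' : Finset β}
    (G : Finset (α × β)) {t : β} (ht : t ∈ T') :
    #(G.filter fun p => p.1 ∈ S ∧ (p.1, t) ∈ G ∧ p.2 ∈ T'.erase t)
      + #(S.filter fun s => (s, t) ∈ G)
      = ∑ s ∈ S.filter (fun s => (s, t) ∈ G), #(T'.filter fun t' => (s, t') ∈ G) := by
  have hlink : (G.filter fun p => p.1 ∈ S ∧ (p.1, t) ∈ G ∧ p.2 ∈ T'.erase t)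
      = ((S.filter fun s => (s, t) ∈ G) ×ˢ T'.erase t).filter (· ∈ G) := by
    ext p
    simp only [mem_filter, mem_product]
    tauto
  rw [hlink, card_filter, sum_product, card_eq_sum_ones (S.filter _), ← sum_add_distrib]
  refine sum_congr rfl fun s hs => ?_
  rw [← card_filter, filter_erase, card_erase_add_one]
  exact mem_filter.mpr ⟨ht, (mem_filter.mp hs).2⟩

theorem sq_sum_card_filter_mem_le (S : Finset α) (T' : Finset β) (G : Finset (α × β)) :
    (∑ t ∈ T', #(S.filter fun s => (s, t) ∈ G)) ^ 2 ≤ #S * ∑ t ∈ T',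
      (#(G.filter fun p => p.1 ∈ S ∧ (p.1, t) ∈ G ∧ p.2 ∈ T'.erase t)
        + #(S.filter fun s => (s, t) ∈ G)) := by
  have hdeg : ∑ t ∈ T', #(S.filter fun s => (s, t) ∈ G)
      = ∑ s ∈ S, #(T'.filter fun t => (s, t) ∈ G) := by
    simp only [card_filter]
    exact sum_comm
  have hpaths : ∑ t ∈ T', (#(G.filter fun p => p.1 ∈ S ∧ (p.1, t) ∈ G ∧ p.2 ∈ T'.erase t)
        + #(S.filter fun s => (s, t) ∈ G))
      = ∑ s ∈ S, #(T'.filter fun t => (s, t) ∈ G) ^ 2 := by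
    rw [sum_congr rfl fun t ht => card_filter_link_add_card_filter_mem S G ht]
    simp only [sum_filter, sq]
    rw [sum_comm]
    refine sum_congr rfl fun s _ => ?_
    rw [card_filter, sum_mul]
    exact sum_congr rfl fun t _ => by split_ifs <;> simp
  rw [hdeg, hpaths]
  exact sq_sum_le_card_mul_sum_sq

theorem card_le_of_hasCombDim_one {b : ℕ} {S : Finset α} {T : Finset β} {G : Finset (α × β)}
    (hG : G ⊆ S ×ˢ T) (hdim : HasCombDim b 1 S T G) : #G ≤ b * (#S + #T) := by
  obtain ⟨T', hT', hb, hnbhd⟩ := hdim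
  calc #G ≤ b * #S + ∑ t ∈ T', #(S.filter fun s => (s, t) ∈ G) :=
        card_le_mul_add_sum_card_filter_mem hG hT' hb
    _ ≤ b * #S + ∑ _t ∈ T', b := by gcongr with t ht; exact hnbhd t ht
    _ ≤ b * (#S + #T) := by
      rw [sum_const, smul_eq_mul, mul_add, mul_comm _ b]
      gcongr

theorem card_le_of_hasCombDim_succ {b k : ℕ} {C : ℝ} (hk : 1 ≤ k) (hC : 1 ≤ C)
    (ih : ∀ (S : Finset α) (T : Finset β) (G : Finset (α × β)), G ⊆ S ×ˢ T →
      HasCombDim b k S T G → (#G : ℝ) ≤ C * (#S + (#S : ℝ) ^ (1 - 1 / (k : ℝ)) * #T))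
    {S : Finset α} {T : Finset β} {G : Finset (α × β)} (hG : G ⊆ S ×ˢ T)
    (hdim : HasCombDim b (k + 1) S T G) :
    (#G : ℝ) ≤ (b + 2 * C + 2) * (#S + (#S : ℝ) ^ (1 - 1 / ((k : ℝ) + 1)) * #T) := by
  obtain ⟨T', hT', hb, hlink⟩ := hdim
  have hk' : (1 : ℝ) ≤ k := by exact_mod_cast hk
  have hGE : (#G : ℝ) ≤ b * #S + ∑ t ∈ T', (#(S.filter fun s => (s, t) ∈ G) : ℝ) := by
    exact_mod_cast card_le_mul_add_sum_card_filter_mem hG hT' hb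
  have hlinks : ∀ t ∈ T', (#(G.filter fun p => p.1 ∈ S ∧ (p.1, t) ∈ G ∧ p.2 ∈ T'.erase t) : ℝ)
      ≤ C * (#(S.filter fun s => (s, t) ∈ G)
        + (#(S.filter fun s => (s, t) ∈ G) : ℝ) ^ (1 - 1 / (k : ℝ)) * #T) := by
    intro t ht
    have hsub : (G.filter fun p => p.1 ∈ S ∧ (p.1, t) ∈ G ∧ p.2 ∈ T'.erase t)
        ⊆ (S.filter fun s => (s, t) ∈ G) ×ˢ T'.erase t := fun p hp => by
      simp only [mem_filter, mem_product] at hp ⊢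
      exact ⟨⟨hp.2.1, hp.2.2.1⟩, hp.2.2.2⟩
    refine (ih _ _ _ hsub (hlink t ht)).trans ?_
    gcongr
    exact (erase_subset t T').trans hT'
  have hE := sum_le_of_sq_sum_le T' (fun t => by positivity) (Nat.cast_nonneg _)
    (by exact_mod_cast card_le_card hT') hC
    (sub_nonneg.mpr (div_le_one_of_le₀ hk' (by positivity))) (sub_le_self _ (by positivity))
    (by exact_mod_cast sq_sum_card_filter_mem_le S T' G) hlinks
  have hexp : (2 - (1 - 1 / (k : ℝ)))⁻¹ = 1 - 1 / ((k : ℝ) + 1) := by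
    have hk0 : (k : ℝ) ≠ 0 := by positivity
    rw [show 2 - (1 - 1 / (k : ℝ)) = (k + 1) / k by field_simp; ring, inv_div]
    field_simp
    ring
  rw [hexp] at hE
  have hST : 0 ≤ (#S : ℝ) ^ (1 - 1 / ((k : ℝ) + 1)) * #T := by positivity
  nlinarith

end Graph

/-- If `S` has combinatorial dimension at most `k ≥ 1` in `G ⊆ S × T`, then `G`
has at most `C(k,b)·(|S| + |S|^{1-1/k}·|T|)` edges. -/
theorem edge_bound_of_combDim (k b : ℕ) (hk : 1 ≤ k) :
    ∃ C : ℝ, 0 < C ∧ ∀ (α β : Type) [DecidableEq α] [DecidableEq β]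
      (S : Finset α) (T : Finset β) (G : Finset (α × β)),
      G ⊆ S ×ˢ T → HasCombDim b k S T G →
      (G.card : ℝ) ≤ C * ((S.card : ℝ) + (S.card : ℝ) ^ (1 - 1/(k : ℝ)) * T.card) := by
  induction k, hk using Nat.le_induction with
  | base =>
    refine ⟨b + 1, by positivity, fun α β _ _ S T G hG hdim => ?_⟩
    have h := card_le_of_hasCombDim_one hG hdim
    rw [Nat.cast_one, div_one, sub_self, Real.rpow_zero, one_mul]
    exact_mod_cast h.trans (Nat.mul_le_mul_right _ b.le_succ)
  | succ k hk ih =>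
    obtain ⟨C, -, hC⟩ := ih
    refine ⟨b + 2 * max C 1 + 2, by positivity, fun α β _ _ S T G hG hdim => ?_⟩
    push_cast
    refine card_le_of_hasCombDim_succ hk (le_max_right C 1) (fun S T G hG hdim => ?_) hG hdim
    exact (hC α β S T G hG hdim).trans (by gcongr; exact le_max_left C 1)
end
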